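/- arXiv:cs/9901015 — 3 statements merged into one kernel-verified Lean document; each statement's English description precedes it below -/
import Mathlib

section
/- Let S be a nonempty finite set, f, g : S → ℝ≥0 with ∑_{s∈S} f(s) ≤ 1 and ∑_{s∈S} g(s) ≤ 1, let λ ∈ [0,1], and let r = |{s ∈ S : f(s) = 0}| / |S|. Then θ_S(λf + (1−λ)g) ≤ 1 − λr + 2√(1−r). -/
set_option maxHeartbeats 800000


open scoped Classical

private lemma sqrt_add_le' (a b : ℝ) (ha : 0 ≤ a) (hb : 0 ≤ b) :
    Real.sqrt (a + b) ≤ Real.sqrt a + Real.sqrt b := by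
  have h : a + b ≤ (Real.sqrt a + Real.sqrt b) ^ 2 := by
    have h1 := Real.sq_sqrt ha
    have h2 := Real.sq_sqrt hb
    have h3 := Real.sqrt_nonneg a
    have h4 := Real.sqrt_nonneg b
    nlinarith [mul_nonneg h3 h4]
  calc Real.sqrt (a + b) ≤ Real.sqrt ((Real.sqrt a + Real.sqrt b) ^ 2) :=
        Real.sqrt_le_sqrt h
    _ = Real.sqrt a + Real.sqrt b := Real.sqrt_sq (by positivity)

theorem theta_convex_combination_bound {α : Type*} (S : Finset α) (hS : S.Nonempty)
    (f g : α → ℝ) (hf0 : ∀ s ∈ S, 0 ≤ f s) (hg0 : ∀ s ∈ S, 0 ≤ g s)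
    (hfsum : ∑ s ∈ S, f s ≤ 1) (hgsum : ∑ s ∈ S, g s ≤ 1)
    (lam : ℝ) (hlam0 : 0 ≤ lam) (hlam1 : lam ≤ 1)
    (r : ℝ) (hr : r = ((S.filter (fun s => f s = 0)).card : ℝ) / (S.card : ℝ)) :
    (1 / (S.card : ℝ)) * (∑ s ∈ S, Real.sqrt (lam * f s + (1 - lam) * g s)) ^ 2
      ≤ 1 - lam * r + 2 * Real.sqrt (1 - r) := by
  set n : ℝ := (S.card : ℝ) with hn
  have hnpos : (0:ℝ) < n := by rw [hn]; exact_mod_cast Finset.card_pos.mpr hS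
  set N : Finset α := S.filter (fun s => ¬ f s = 0) with hN
  have hcard : ((S.filter (fun s => f s = 0)).card : ℝ) + (N.card : ℝ) = n := by
    rw [hn, hN]
    exact_mod_cast S.card_filter_add_card_filter_not (p := fun s => f s = 0)
  have hr0 : 0 ≤ r := by
    rw [hr]; positivity
  have hrn : r * n = ((S.filter (fun s => f s = 0)).card : ℝ) := by
    rw [hr]; field_simp
  have hNcard : (N.card : ℝ) = (1 - r) * n := by
    have : (1 - r) * n = n - r * n := by ring
    rw [this, hrn, ← hcard]; ring
  have hr1 : r ≤ 1 := by
    nlinarith [Nat.cast_nonneg (α := ℝ) N.card]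
  -- bound on F = ∑ sqrt f
  have hFeq : ∑ s ∈ S, Real.sqrt (f s) = ∑ s ∈ N, Real.sqrt (f s) := by
    rw [← S.sum_filter_add_sum_filter_not (fun s => f s = 0), ← hN]
    have : ∑ s ∈ S.filter (fun s => f s = 0), Real.sqrt (f s) = 0 := by
      apply Finset.sum_eq_zero
      intro s hs
      rw [(Finset.mem_filter.mp hs).2, Real.sqrt_zero]
    rw [this, zero_add]
  have hFsq : (∑ s ∈ S, Real.sqrt (f s)) ^ 2 ≤ (N.card : ℝ) := by
    rw [hFeq]
    calc (∑ s ∈ N, Real.sqrt (f s)) ^ 2 ≤ (N.card : ℝ) * ∑ s ∈ N, (Real.sqrt (f s)) ^ 2 :=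
          sq_sum_le_card_mul_sum_sq
      _ = (N.card : ℝ) * ∑ s ∈ N, f s := by
          congr 1
          apply Finset.sum_congr rfl
          intro s hs
          exact Real.sq_sqrt (hf0 s (Finset.mem_filter.mp hs).1)
      _ ≤ (N.card : ℝ) * 1 := by
          apply mul_le_mul_of_nonneg_left _ (Nat.cast_nonneg _)
          calc ∑ s ∈ N, f s ≤ ∑ s ∈ S, f s := by
                apply Finset.sum_le_sum_of_subset_of_nonneg (Finset.filter_subset _ _)
                intro s hs _; exact hf0 s hs
            _ ≤ 1 := hfsum
      _ = (N.card : ℝ) := mul_one _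
  have hF : ∑ s ∈ S, Real.sqrt (f s) ≤ Real.sqrt (1 - r) * Real.sqrt n := by
    have h1 : ∑ s ∈ S, Real.sqrt (f s) ≤ Real.sqrt ((N.card : ℝ)) := by
      rw [show ((N.card : ℝ)) = Real.sqrt ((N.card:ℝ))^2 from
        (Real.sq_sqrt (Nat.cast_nonneg _)).symm] at hFsq
      have hFnn : 0 ≤ ∑ s ∈ S, Real.sqrt (f s) :=
        Finset.sum_nonneg (fun s _ => Real.sqrt_nonneg _)
      nlinarith [Real.sqrt_nonneg ((N.card : ℝ))]
    rw [hNcard, Real.sqrt_mul (by linarith)] at h1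
    exact h1
  have hGsq : (∑ s ∈ S, Real.sqrt (g s)) ^ 2 ≤ n := by
    calc (∑ s ∈ S, Real.sqrt (g s)) ^ 2 ≤ n * ∑ s ∈ S, (Real.sqrt (g s)) ^ 2 := by
          rw [hn]; exact sq_sum_le_card_mul_sum_sq
      _ = n * ∑ s ∈ S, g s := by
          congr 1
          exact Finset.sum_congr rfl fun s hs => Real.sq_sqrt (hg0 s hs)
      _ ≤ n * 1 := mul_le_mul_of_nonneg_left hgsum (le_of_lt hnpos)
      _ = n := mul_one _
  have hG : ∑ s ∈ S, Real.sqrt (g s) ≤ Real.sqrt n := by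
    have hGnn : 0 ≤ ∑ s ∈ S, Real.sqrt (g s) :=
      Finset.sum_nonneg (fun s _ => Real.sqrt_nonneg _)
    nlinarith [Real.sq_sqrt (le_of_lt hnpos), Real.sqrt_nonneg n]
  -- bound on T
  set T := ∑ s ∈ S, Real.sqrt (lam * f s + (1 - lam) * g s) with hT
  have hTnn : 0 ≤ T := Finset.sum_nonneg (fun s _ => Real.sqrt_nonneg _)
  have hTle : T ≤ Real.sqrt n * (Real.sqrt lam * Real.sqrt (1 - r) + Real.sqrt (1 - lam)) := by
    have step1 : T ≤ Real.sqrt lam * (∑ s ∈ S, Real.sqrt (f s))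
        + Real.sqrt (1 - lam) * (∑ s ∈ S, Real.sqrt (g s)) := by
      rw [hT, Finset.mul_sum, Finset.mul_sum, ← Finset.sum_add_distrib]
      apply Finset.sum_le_sum
      intro s hs
      have h1 : Real.sqrt (lam * f s + (1 - lam) * g s)
          ≤ Real.sqrt (lam * f s) + Real.sqrt ((1 - lam) * g s) :=
        sqrt_add_le' _ _ (mul_nonneg hlam0 (hf0 s hs))
          (mul_nonneg (by linarith) (hg0 s hs))
      rw [Real.sqrt_mul hlam0, Real.sqrt_mul (by linarith : (0:ℝ) ≤ 1 - lam)] at h1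
      exact h1
    calc T ≤ Real.sqrt lam * (∑ s ∈ S, Real.sqrt (f s))
        + Real.sqrt (1 - lam) * (∑ s ∈ S, Real.sqrt (g s)) := step1
      _ ≤ Real.sqrt lam * (Real.sqrt (1 - r) * Real.sqrt n)
        + Real.sqrt (1 - lam) * Real.sqrt n := by
          apply add_le_add
          · exact mul_le_mul_of_nonneg_left hF (Real.sqrt_nonneg _)
          · exact mul_le_mul_of_nonneg_left hG (Real.sqrt_nonneg _)
      _ = Real.sqrt n * (Real.sqrt lam * Real.sqrt (1 - r) + Real.sqrt (1 - lam)) := by ring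
  -- finish
  have hB : 0 ≤ Real.sqrt lam * Real.sqrt (1 - r) + Real.sqrt (1 - lam) := by positivity
  have hT2 : T ^ 2 ≤ n * (Real.sqrt lam * Real.sqrt (1 - r) + Real.sqrt (1 - lam)) ^ 2 := by
    have := mul_self_le_mul_self hTnn hTle
    have hsq : (Real.sqrt n * (Real.sqrt lam * Real.sqrt (1 - r) + Real.sqrt (1 - lam))) ^ 2
        = n * (Real.sqrt lam * Real.sqrt (1 - r) + Real.sqrt (1 - lam)) ^ 2 := by
      rw [mul_pow, Real.sq_sqrt (le_of_lt hnpos)]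
    nlinarith
  have key : (Real.sqrt lam * Real.sqrt (1 - r) + Real.sqrt (1 - lam)) ^ 2
      ≤ 1 - lam * r + 2 * Real.sqrt (1 - r) := by
    have e1 : Real.sqrt lam ^ 2 = lam := Real.sq_sqrt hlam0
    have e2 : Real.sqrt (1 - r) ^ 2 = 1 - r := Real.sq_sqrt (by linarith)
    have e3 : Real.sqrt (1 - lam) ^ 2 = 1 - lam := Real.sq_sqrt (by linarith)
    have cross : Real.sqrt lam * Real.sqrt (1 - lam) ≤ 1 := by
      nlinarith [Real.sqrt_nonneg lam, Real.sqrt_nonneg (1 - lam)]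
    have hsr : 0 ≤ Real.sqrt (1 - r) := Real.sqrt_nonneg _
    nlinarith [mul_le_mul_of_nonneg_right cross hsr]
  calc (1 / n) * T ^ 2
      ≤ (1 / n) * (n * (Real.sqrt lam * Real.sqrt (1 - r) + Real.sqrt (1 - lam)) ^ 2) := by
        apply mul_le_mul_of_nonneg_left hT2 (by positivity)
    _ = (Real.sqrt lam * Real.sqrt (1 - r) + Real.sqrt (1 - lam)) ^ 2 := by
        field_simp
    _ ≤ 1 - lam * r + 2 * Real.sqrt (1 - r) := key
end

section
/- Let S be a nonempty finite set, f, g : S → ℝ≥0 with ∑ f ≤ 1 and ∑ g ≤ 1, λ ∈ [0,1], S' = {s ∈ S : f(s) = 0}, and r = |S'|/|S|. Then √(θ_S(λf + (1−λ)g)) ≤ √((1−λ)r) + √(1−r). -/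
open scoped Classical

lemma sum_sqrt_le_sqrt_card_mul {α : Type*} (T : Finset α) (x : α → ℝ)
    (hx : ∀ s ∈ T, 0 ≤ x s) :
    ∑ s ∈ T, Real.sqrt (x s) ≤ Real.sqrt ((T.card : ℝ) * ∑ s ∈ T, x s) := by
  have h0 : 0 ≤ ∑ s ∈ T, Real.sqrt (x s) :=
    Finset.sum_nonneg fun s _ => Real.sqrt_nonneg _
  rw [show (∑ s ∈ T, x s) = ∑ s ∈ T, (Real.sqrt (x s))^2 from
    Finset.sum_congr rfl fun s hs => (Real.sq_sqrt (hx s hs)).symm]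
  exact (Real.le_sqrt h0 (by positivity)).mpr sq_sum_le_card_mul_sum_sq

theorem sqrt_theta_convex_combination_bound {α : Type*} (S : Finset α) (hS : S.Nonempty)
    (f g : α → ℝ) (hf0 : ∀ s ∈ S, 0 ≤ f s) (hg0 : ∀ s ∈ S, 0 ≤ g s)
    (hfsum : ∑ s ∈ S, f s ≤ 1) (hgsum : ∑ s ∈ S, g s ≤ 1)
    (lam : ℝ) (hlam0 : 0 ≤ lam) (hlam1 : lam ≤ 1)
    (r : ℝ) (hr : r = ((S.filter (fun s => f s = 0)).card : ℝ) / (S.card : ℝ)) :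
    Real.sqrt ((1 / (S.card : ℝ)) *
        (∑ s ∈ S, Real.sqrt (lam * f s + (1 - lam) * g s)) ^ 2)
      ≤ Real.sqrt ((1 - lam) * r) + Real.sqrt (1 - r) := by
  classical
  set S' := S.filter (fun s => f s = 0) with hS'def
  have hsub : S' ⊆ S := Finset.filter_subset _ _
  set n : ℝ := (S.card : ℝ) with hn'
  set k : ℝ := (S'.card : ℝ) with hk'
  have hn : 0 < n := by rw [hn']; exact_mod_cast Finset.card_pos.mpr hS
  have hkn : k ≤ n := by rw [hn', hk']; exact_mod_cast Finset.card_le_card hsub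
  have hk0 : 0 ≤ k := Nat.cast_nonneg _
  have hnonneg : ∀ s ∈ S, 0 ≤ lam * f s + (1 - lam) * g s := fun s hs => by
    have := hf0 s hs; have := hg0 s hs; nlinarith
  set A : ℝ := ∑ s ∈ S, Real.sqrt (lam * f s + (1 - lam) * g s) with hA
  have hA0 : 0 ≤ A := Finset.sum_nonneg fun s _ => Real.sqrt_nonneg _
  -- split
  have hsplit : A = (∑ s ∈ S \ S', Real.sqrt (lam * f s + (1 - lam) * g s))
      + ∑ s ∈ S', Real.sqrt (lam * f s + (1 - lam) * g s) :=
    (Finset.sum_sdiff hsub).symm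
  -- bound on S'
  have hb1 : ∑ s ∈ S', Real.sqrt (lam * f s + (1 - lam) * g s)
      ≤ Real.sqrt (k * (1 - lam)) := by
    calc ∑ s ∈ S', Real.sqrt (lam * f s + (1 - lam) * g s)
        ≤ Real.sqrt (k * ∑ s ∈ S', (lam * f s + (1 - lam) * g s)) :=
          sum_sqrt_le_sqrt_card_mul S' _ (fun s hs => hnonneg s (hsub hs))
      _ ≤ Real.sqrt (k * (1 - lam)) := by
          apply Real.sqrt_le_sqrt
          apply mul_le_mul_of_nonneg_left _ hk0
          have h1 : ∑ s ∈ S', (lam * f s + (1 - lam) * g s)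
              = ∑ s ∈ S', (1 - lam) * g s := by
            apply Finset.sum_congr rfl
            intro s hs
            have : f s = 0 := (Finset.mem_filter.mp hs).2
            rw [this]; ring
          rw [h1, ← Finset.mul_sum]
          have hgS' : ∑ s ∈ S', g s ≤ 1 :=
            le_trans (Finset.sum_le_sum_of_subset_of_nonneg hsub
              (fun s hs _ => hg0 s hs)) hgsum
          have hgS'0 : 0 ≤ ∑ s ∈ S', g s :=
            Finset.sum_nonneg fun s hs => hg0 s (hsub hs)
          nlinarith
  -- bound on S \ S'
  have hb2 : ∑ s ∈ S \ S', Real.sqrt (lam * f s + (1 - lam) * g s)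
      ≤ Real.sqrt (n - k) := by
    have hcard : ((S \ S').card : ℝ) = n - k := by
      rw [Finset.card_sdiff_of_subset hsub]
      push_cast [Nat.cast_sub (Finset.card_le_card hsub)]
      ring
    calc ∑ s ∈ S \ S', Real.sqrt (lam * f s + (1 - lam) * g s)
        ≤ Real.sqrt (((S \ S').card : ℝ) * ∑ s ∈ S \ S', (lam * f s + (1 - lam) * g s)) :=
          sum_sqrt_le_sqrt_card_mul _ _ (fun s hs => hnonneg s (Finset.mem_sdiff.mp hs).1)
      _ ≤ Real.sqrt (n - k) := by
          apply Real.sqrt_le_sqrt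
          rw [hcard]
          have hsum1 : ∑ s ∈ S \ S', (lam * f s + (1 - lam) * g s) ≤ 1 := by
            have hle : ∑ s ∈ S \ S', (lam * f s + (1 - lam) * g s)
                ≤ ∑ s ∈ S, (lam * f s + (1 - lam) * g s) :=
              Finset.sum_le_sum_of_subset_of_nonneg (Finset.sdiff_subset)
                (fun s hs _ => hnonneg s hs)
            have : ∑ s ∈ S, (lam * f s + (1 - lam) * g s)
                = lam * (∑ s ∈ S, f s) + (1 - lam) * (∑ s ∈ S, g s) := by
              rw [Finset.sum_add_distrib, Finset.mul_sum, Finset.mul_sum]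
            nlinarith
          have h0 : 0 ≤ ∑ s ∈ S \ S', (lam * f s + (1 - lam) * g s) :=
            Finset.sum_nonneg fun s hs => hnonneg s (Finset.mem_sdiff.mp hs).1
          nlinarith
  -- assemble
  have hLHS : Real.sqrt ((1 / n) * A ^ 2) = A / Real.sqrt n := by
    rw [Real.sqrt_mul (by positivity), Real.sqrt_sq hA0, one_div,
      Real.sqrt_inv, inv_mul_eq_div]
  rw [hLHS]
  have hsn : 0 < Real.sqrt n := Real.sqrt_pos.mpr hn
  rw [div_le_iff₀ hsn]
  have hr0 : 0 ≤ r := by rw [hr]; positivity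
  have h1 : Real.sqrt ((1 - lam) * r) * Real.sqrt n = Real.sqrt (k * (1 - lam)) := by
    rw [← Real.sqrt_mul (mul_nonneg (by linarith) hr0)]
    congr 1
    rw [hr]
    field_simp
  have h2 : Real.sqrt (1 - r) * Real.sqrt n = Real.sqrt (n - k) := by
    have hr1 : 1 - r = (n - k) / n := by rw [hr]; field_simp
    rw [← Real.sqrt_mul (by rw [hr1]; exact div_nonneg (by linarith) hn.le)]
    congr 1
    rw [hr1]
    field_simp
  rw [add_mul, h1, h2, hsplit]
  linarith
end

section
/- Let N, m be positive integers and {D_v}_{v ∈ {1,…,N}^m} be a family of pairwise disjoint events whose probabilities sum to at most 1, with the property that conditioned on D_v, the event B_u occurs whenever u_i = v_i for some i. If additionally ∑_v Pr[D_v] = 1, and U is uniform on {1,…,N}^m and independent of the D_v, then Pr[B_U] ≥ 1 − (1 − 1/N)^m. -/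
open MeasureTheory

theorem prob_B_U_ge (N m : ℕ) (hN : 0 < N) (hm : 0 < m)
    {Ω : Type*} [MeasurableSpace Ω] (μ : Measure Ω) [IsProbabilityMeasure μ]
    (B D : (Fin m → Fin N) → Set Ω)
    (hBmeas : ∀ u, MeasurableSet (B u)) (hDmeas : ∀ v, MeasurableSet (D v))
    (hdisj : Pairwise (Function.onFun Disjoint D))
    (hDsum : ∑ v : Fin m → Fin N, (μ (D v)).toReal = 1)
    (hcond : ∀ u v : Fin m → Fin N, (∃ i, u i = v i) → μ (B u ∩ D v) = μ (D v)) :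
    ((N : ℝ) ^ m)⁻¹ * ∑ u : Fin m → Fin N, (μ (B u)).toReal
      ≥ 1 - (1 - 1 / (N : ℝ)) ^ m := by
  classical
  set P : (Fin m → Fin N) → (Fin m → Fin N) → Prop :=
    fun u v => ∃ i, u i = v i with hP
  -- step 1: per u lower bound
  have key : ∀ u, ∑ v ∈ Finset.univ.filter (P u), (μ (D v)).toReal
      ≤ (μ (B u)).toReal := by
    intro u
    have h1 : ∑ v ∈ Finset.univ.filter (P u), μ (D v) ≤ μ (B u) := by
      have hcongr : ∑ v ∈ Finset.univ.filter (P u), μ (D v)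
          = ∑ v ∈ Finset.univ.filter (P u), μ (B u ∩ D v) := by
        refine Finset.sum_congr rfl ?_
        intro v hv
        rw [hcond u v (Finset.mem_filter.mp hv).2]
      rw [hcongr]
      have hdisj' : Set.PairwiseDisjoint
          (↑(Finset.univ.filter (P u)) : Set (Fin m → Fin N))
          (fun v => B u ∩ D v) := by
        intro a _ b _ hab
        exact (hdisj hab).mono Set.inter_subset_right Set.inter_subset_right
      rw [← measure_biUnion_finset hdisj' (fun v _ => (hBmeas u).inter (hDmeas v))]
      exact measure_mono (by simp [Set.iUnion_subset_iff])
    have hfin : ∀ v ∈ Finset.univ.filter (P u), μ (D v) ≠ ⊤ :=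
      fun v _ => measure_ne_top μ _
    calc ∑ v ∈ Finset.univ.filter (P u), (μ (D v)).toReal
        = (∑ v ∈ Finset.univ.filter (P u), μ (D v)).toReal :=
          (ENNReal.toReal_sum hfin).symm
      _ ≤ (μ (B u)).toReal := ENNReal.toReal_mono (measure_ne_top μ _) h1
  -- counting
  have hcount : ∀ v : Fin m → Fin N,
      ((Finset.univ.filter (fun u => P u v)).card : ℝ)
        = (N : ℝ) ^ m - ((N : ℝ) - 1) ^ m := by
    intro v
    have hcompl : Finset.univ.filter (fun u : Fin m → Fin N => ¬ P u v)
        = Fintype.piFinset (fun i => ({v i}ᶜ : Finset (Fin N))) := by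
      ext u
      simp [hP, Fintype.mem_piFinset, not_exists]
    have hc2 : (Finset.univ.filter (fun u : Fin m → Fin N => ¬ P u v)).card
        = (N - 1) ^ m := by
      rw [hcompl, Fintype.card_piFinset]
      simp [Finset.card_compl]
    have hsum := Finset.card_filter_add_card_filter_not
      (s := (Finset.univ : Finset (Fin m → Fin N))) (p := fun u => P u v)
    rw [hc2, Finset.card_univ] at hsum
    have hcard : Fintype.card (Fin m → Fin N) = N ^ m := by simp
    have : ((Finset.univ.filter (fun u => P u v)).card : ℝ) + ((N - 1 : ℕ) : ℝ) ^ m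
        = (N : ℝ) ^ m := by
      rw [hcard] at hsum
      exact_mod_cast hsum
    have hcast : ((N - 1 : ℕ) : ℝ) = (N : ℝ) - 1 := by
      push_cast [Nat.cast_sub hN]
      ring
    rw [hcast] at this
    linarith
  -- step 2: total sum bound
  have hsum2 : (N : ℝ) ^ m - ((N : ℝ) - 1) ^ m
      ≤ ∑ u : Fin m → Fin N, (μ (B u)).toReal := by
    have hswap : ∑ u : Fin m → Fin N, ∑ v ∈ Finset.univ.filter (P u), (μ (D v)).toReal
        = ∑ v : Fin m → Fin N,
            ((Finset.univ.filter (fun u => P u v)).card : ℝ) * (μ (D v)).toReal := by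
      calc ∑ u : Fin m → Fin N, ∑ v ∈ Finset.univ.filter (P u), (μ (D v)).toReal
          = ∑ u : Fin m → Fin N, ∑ v : Fin m → Fin N,
              if P u v then (μ (D v)).toReal else 0 := by
            refine Finset.sum_congr rfl fun u _ => ?_
            rw [Finset.sum_filter]
        _ = ∑ v : Fin m → Fin N, ∑ u : Fin m → Fin N,
              if P u v then (μ (D v)).toReal else 0 := Finset.sum_comm
        _ = ∑ v : Fin m → Fin N,
              ((Finset.univ.filter (fun u => P u v)).card : ℝ) * (μ (D v)).toReal := by
            refine Finset.sum_congr rfl fun v _ => ?_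
            rw [← Finset.sum_filter, Finset.sum_const, nsmul_eq_mul]
    have h3 : ∑ v : Fin m → Fin N,
        ((Finset.univ.filter (fun u => P u v)).card : ℝ) * (μ (D v)).toReal
        = (N : ℝ) ^ m - ((N : ℝ) - 1) ^ m := by
      calc ∑ v : Fin m → Fin N,
            ((Finset.univ.filter (fun u => P u v)).card : ℝ) * (μ (D v)).toReal
          = ∑ v : Fin m → Fin N,
              ((N : ℝ) ^ m - ((N : ℝ) - 1) ^ m) * (μ (D v)).toReal := by
            refine Finset.sum_congr rfl fun v _ => ?_
            rw [hcount v]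
        _ = ((N : ℝ) ^ m - ((N : ℝ) - 1) ^ m) * ∑ v : Fin m → Fin N, (μ (D v)).toReal :=
            (Finset.mul_sum _ _ _).symm
        _ = (N : ℝ) ^ m - ((N : ℝ) - 1) ^ m := by rw [hDsum, mul_one]
    calc (N : ℝ) ^ m - ((N : ℝ) - 1) ^ m
        = ∑ u : Fin m → Fin N, ∑ v ∈ Finset.univ.filter (P u), (μ (D v)).toReal := by
          rw [hswap, h3]
      _ ≤ ∑ u : Fin m → Fin N, (μ (B u)).toReal := Finset.sum_le_sum fun u _ => key u
  -- final arithmetic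
  have hNpos : (0 : ℝ) < N := by exact_mod_cast hN
  have hNm : (0 : ℝ) < (N : ℝ) ^ m := pow_pos hNpos m
  have hrw : 1 - (1 - 1 / (N : ℝ)) ^ m
      = ((N : ℝ) ^ m)⁻¹ * ((N : ℝ) ^ m - ((N : ℝ) - 1) ^ m) := by
    have : (1 - 1 / (N : ℝ)) = ((N : ℝ) - 1) / N := by field_simp
    rw [this, div_pow]
    field_simp
  rw [ge_iff_le, hrw]
  exact mul_le_mul_of_nonneg_left hsum2 (inv_nonneg.mpr hNm.le)
end
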